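/- For every base SL-FL formula α, store s, and heaplet h: if (s, h) ⊨ α, then Supp(α, s, h) = dom(h); i.e., the support of a formula on any heaplet satisfying it is exactly the domain of that heaplet. -/
import Mathlib


/-!
# Base SL-FL (determined-heaplet separation logic)

Locations `Loc` with a distinguished `nil`, field names `F`, variables `Var`.
A heaplet is a domain `dom ⊆ Loc \ {nil}` together with, for each field, a function
defined on the domain (extended by `nil` outside the domain, so that heaplets with the
same domain and the same field values on the domain are equal).
-/

namespace SLFL

open scoped Classical

/-- A heaplet: a domain of locations (not containing `nil`) together with a value for
each field at each location of the domain.  Outside the domain the maps are required to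
take the junk value `nil`, so that heaplets are determined by their domain and their
field values on the domain. -/
structure Heaplet (Loc F : Type) (nil : Loc) where
  dom : Set Loc
  map : F → Loc → Loc
  nil_not_mem : nil ∉ dom
  map_outside : ∀ f l, l ∉ dom → map f l = nil

variable {Loc F Var : Type} {nil : Loc}

/-- The restriction `h↾S`: the heaplet with domain `S ∩ dom h` and fields restricted
accordingly. -/
noncomputable def Heaplet.restrict (h : Heaplet Loc F nil) (S : Set Loc) :
    Heaplet Loc F nil where
  dom := S ∩ h.dom
  map := fun f l => if l ∈ S ∩ h.dom then h.map f l else nil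
  nil_not_mem := fun hc => h.nil_not_mem hc.2
  map_outside := fun f l hl => by simp [hl]

/-- `Agrees h' h S`: the heaplet `h'` agrees with `h` on the set `S`. -/
def Agrees (h' h : Heaplet Loc F nil) (S : Set Loc) : Prop :=
  S ⊆ h.dom ∧ S ⊆ h'.dom ∧ ∀ f : F, ∀ u ∈ S, h'.map f u = h.map f u

/-- `Subheaplet h' h`: `h'` is a subheaplet of `h`. -/
def Subheaplet (h' h : Heaplet Loc F nil) : Prop :=
  h'.dom ⊆ h.dom ∧ Agrees h h' h'.dom

/-- Formulas of the base SL-FL logic: heap-independent formulas, points-to atoms,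
guarded existentials `∃y.(x ↦_f y : α)`, conditionals, conjunction, overlapping
conjunction `∧∧`, disjunction, and separating conjunction `⋆`. -/
inductive Fml (Var F Loc : Type) : Type _ where
  | pure (δ : (Var → Loc) → Prop)
  | pointsTo (x : Var) (f : F) (y : Var)
  | exGuard (y x : Var) (f : F) (α : Fml Var F Loc)
  | ite (γ α β : Fml Var F Loc)
  | and (α β : Fml Var F Loc)
  | oand (α β : Fml Var F Loc)
  | or (α β : Fml Var F Loc)
  | star (α β : Fml Var F Loc)

/-- Union of two partial sets of locations (`none` plays the role of `⊥`). -/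
def union2 : Option (Set Loc) → Option (Set Loc) → Option (Set Loc)
  | some a, some b => some (a ∪ b)
  | _, _ => none

mutual
/-- The partial support `Supp(α, s, h)`; `none` is `⊥`. -/
noncomputable def Supp : Fml Var F Loc → (Var → Loc) → Heaplet Loc F nil → Option (Set Loc)
  | .pure _, _, _ => some (∅ : Set Loc)
  | .pointsTo x _ _, s, h => if s x ∈ h.dom then some {s x} else none
  | .exGuard y x f α, s, h =>
      if s x ∈ h.dom then
        match Supp α (Function.update s y (h.map f (s x))) h with
        | some S => some ({s x} ∪ S)
        | none => none
      else none
  | .ite γ α β, s, h =>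
      match Supp γ s h with
      | none => none
      | some Sγ =>
        if Sat γ s (h.restrict Sγ) then (Supp α s h).map fun Sα => Sγ ∪ Sα
        else (Supp β s h).map fun Sβ => Sγ ∪ Sβ
  | .and α β, s, h => union2 (Supp α s h) (Supp β s h)
  | .oand α β, s, h => union2 (Supp α s h) (Supp β s h)
  | .or α β, s, h => union2 (Supp α s h) (Supp β s h)
  | .star α β, s, h => union2 (Supp α s h) (Supp β s h)

/-- Satisfaction `(s, h) ⊨ α`. -/
noncomputable def Sat : Fml Var F Loc → (Var → Loc) → Heaplet Loc F nil → Prop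
  | .pure δ, s, h => δ s ∧ h.dom = ∅
  | .pointsTo x f y, s, h => h.dom = {s x} ∧ h.map f (s x) = s y
  | .exGuard y x f α, s, h =>
      s x ∈ h.dom ∧
        ∃ S, Supp α (Function.update s y (h.map f (s x))) h = some S ∧
          h.dom = {s x} ∪ S ∧
          Sat α (Function.update s y (h.map f (s x))) (h.restrict S)
  | .ite γ α β, s, h =>
      ∃ Sγ, Supp γ s h = some Sγ ∧
        ((Sat γ s (h.restrict Sγ) ∧
            ∃ Sα, Supp α s h = some Sα ∧ h.dom = Sγ ∪ Sα ∧ Sat α s (h.restrict Sα)) ∨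
         (¬ Sat γ s (h.restrict Sγ) ∧
            ∃ Sβ, Supp β s h = some Sβ ∧ h.dom = Sγ ∪ Sβ ∧ Sat β s (h.restrict Sβ)))
  | .and α β, s, h => Sat α s h ∧ Sat β s h
  | .oand α β, s, h =>
      ∃ Sα Sβ, Supp α s h = some Sα ∧ Supp β s h = some Sβ ∧
        h.dom = Sα ∪ Sβ ∧ Sat α s (h.restrict Sα) ∧ Sat β s (h.restrict Sβ)
  | .or α β, s, h =>
      ∃ Sα Sβ, Supp α s h = some Sα ∧ Supp β s h = some Sβ ∧
        h.dom = Sα ∪ Sβ ∧ (Sat α s (h.restrict Sα) ∨ Sat β s (h.restrict Sβ))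
  | .star α β, s, h =>
      ∃ h₁ h₂ : Heaplet Loc F nil, Subheaplet h₁ h ∧ Subheaplet h₂ h ∧
        Disjoint h₁.dom h₂.dom ∧ h.dom = h₁.dom ∪ h₂.dom ∧ Sat α s h₁ ∧ Sat β s h₂
end

theorem Heaplet.ext' {h h' : Heaplet Loc F nil}
    (hdom : h.dom = h'.dom) (hmap : ∀ f l, l ∈ h.dom → h.map f l = h'.map f l) :
    h = h' := by
  cases h with
  | mk d m nn mo =>
    cases h' with
    | mk d' m' nn' mo' =>
      simp only at hdom hmap
      subst hdom
      congr 1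
      funext f l
      by_cases hl : l ∈ d
      · exact hmap f l hl
      · rw [mo f l hl, mo' f l hl]

theorem union2_some {a b : Option (Set Loc)} {A B : Set Loc}
    (ha : a = some A) (hb : b = some B) : union2 a b = some (A ∪ B) := by
  subst ha hb; rfl

theorem union2_eq_some {a b : Option (Set Loc)} {S : Set Loc}
    (h : union2 a b = some S) : ∃ A B, a = some A ∧ b = some B ∧ S = A ∪ B := by
  match a, b with
  | some A, some B =>
    refine ⟨A, B, rfl, rfl, ?_⟩
    simpa [union2] using h.symm
  | some _, none => simp [union2] at h
  | none, _ => simp [union2] at h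

/-- A support that is not `⊥` is a subset of the domain. -/
theorem supp_subset_dom (α : Fml Var F Loc) (s : Var → Loc) (h : Heaplet Loc F nil)
    {S : Set Loc} (hS : Supp (nil := nil) α s h = some S) : S ⊆ h.dom := by
  induction α generalizing s S with
  | pure δ =>
    simp only [Supp, Option.some.injEq] at hS
    subst hS; exact Set.empty_subset _
  | pointsTo x f y =>
    simp only [Supp] at hS
    split at hS
    · next hx =>
      simp only [Option.some.injEq] at hS
      subst hS
      exact Set.singleton_subset_iff.2 hx
    · exact absurd hS (by simp)
  | exGuard y x f α ih =>
    simp only [Supp] at hS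
    split at hS
    · next hx =>
      split at hS
      · next S₀ hS₀ =>
        simp only [Option.some.injEq] at hS; subst hS
        exact Set.union_subset (Set.singleton_subset_iff.2 hx) (ih _ hS₀)
      · exact absurd hS (by simp)
    · exact absurd hS (by simp)
  | ite γ α β ihγ ihα ihβ =>
    simp only [Supp] at hS
    split at hS
    · exact absurd hS (by simp)
    · next Sγ hSγ =>
      split at hS
      all_goals {
        rw [Option.map_eq_some_iff] at hS
        obtain ⟨S₀, hS₀, rfl⟩ := hS
        exact Set.union_subset (ihγ _ hSγ) (by first | exact ihα _ hS₀ | exact ihβ _ hS₀)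
      }
  | and α β ihα ihβ =>
    simp only [Supp] at hS
    obtain ⟨A, B, hA, hB, rfl⟩ := union2_eq_some hS
    exact Set.union_subset (ihα _ hA) (ihβ _ hB)
  | oand α β ihα ihβ =>
    simp only [Supp] at hS
    obtain ⟨A, B, hA, hB, rfl⟩ := union2_eq_some hS
    exact Set.union_subset (ihα _ hA) (ihβ _ hB)
  | or α β ihα ihβ =>
    simp only [Supp] at hS
    obtain ⟨A, B, hA, hB, rfl⟩ := union2_eq_some hS
    exact Set.union_subset (ihα _ hA) (ihβ _ hB)
  | star α β ihα ihβ =>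
    simp only [Supp] at hS
    obtain ⟨A, B, hA, hB, rfl⟩ := union2_eq_some hS
    exact Set.union_subset (ihα _ hA) (ihβ _ hB)

theorem restrict_eq_of_subheaplet {h' h : Heaplet Loc F nil} (hsub : Subheaplet h' h)
    {S : Set Loc} (hS : S ⊆ h'.dom) : h.restrict S = h'.restrict S := by
  obtain ⟨hd, -, -, hmap⟩ := hsub
  apply Heaplet.ext'
  · show S ∩ h.dom = S ∩ h'.dom
    rw [Set.inter_eq_left.2 (hS.trans hd), Set.inter_eq_left.2 hS]
  · intro f l hl
    obtain ⟨hl1, -⟩ := hl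
    have hl' : l ∈ h'.dom := hS hl1
    simp only [Heaplet.restrict, Set.mem_inter_iff, hl1, hl', hS.trans hd hl1, true_and,
      if_true, if_pos]
    exact hmap f l hl'

/-- Supports are stable under passing to a larger heaplet. -/
theorem supp_mono (α : Fml Var F Loc) (s : Var → Loc) {h' h : Heaplet Loc F nil}
    (hsub : Subheaplet h' h) {S : Set Loc}
    (hS : Supp (nil := nil) α s h' = some S) : Supp (nil := nil) α s h = some S := by
  obtain ⟨hd, -, -, hmap⟩ := id hsub
  induction α generalizing s S with
  | pure δ => simpa [Supp] using hS
  | pointsTo x f y =>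
    simp only [Supp] at hS ⊢
    split at hS
    · next hx => rw [if_pos (hd hx)]; exact hS
    · exact absurd hS (by simp)
  | exGuard y x f α ih =>
    simp only [Supp] at hS ⊢
    split at hS
    · next hx =>
      rw [if_pos (hd hx)]
      rw [hmap f (s x) hx]
      split at hS
      · next S₀ hS₀ => rw [ih _ hS₀]; exact hS
      · exact absurd hS (by simp)
    · exact absurd hS (by simp)
  | ite γ α β ihγ ihα ihβ =>
    simp only [Supp] at hS ⊢
    split at hS
    · exact absurd hS (by simp)
    · next Sγ hSγ =>
      rw [ihγ _ hSγ]
      have hres : h.restrict Sγ = h'.restrict Sγ :=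
        restrict_eq_of_subheaplet hsub (supp_subset_dom γ s h' hSγ)
      dsimp only
      rw [hres]
      split at hS
      · next hg =>
        rw [if_pos hg]
        rw [Option.map_eq_some_iff] at hS
        obtain ⟨S₀, hS₀, rfl⟩ := hS
        rw [ihα _ hS₀]; rfl
      · next hg =>
        rw [if_neg hg]
        rw [Option.map_eq_some_iff] at hS
        obtain ⟨S₀, hS₀, rfl⟩ := hS
        rw [ihβ _ hS₀]; rfl
  | and α β ihα ihβ =>
    simp only [Supp] at hS ⊢
    obtain ⟨A, B, hA, hB, rfl⟩ := union2_eq_some hS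
    exact union2_some (ihα _ hA) (ihβ _ hB)
  | oand α β ihα ihβ =>
    simp only [Supp] at hS ⊢
    obtain ⟨A, B, hA, hB, rfl⟩ := union2_eq_some hS
    exact union2_some (ihα _ hA) (ihβ _ hB)
  | or α β ihα ihβ =>
    simp only [Supp] at hS ⊢
    obtain ⟨A, B, hA, hB, rfl⟩ := union2_eq_some hS
    exact union2_some (ihα _ hA) (ihβ _ hB)
  | star α β ihα ihβ =>
    simp only [Supp] at hS ⊢
    obtain ⟨A, B, hA, hB, rfl⟩ := union2_eq_some hS
    exact union2_some (ihα _ hA) (ihβ _ hB)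

theorem subheaplet_restrict (h : Heaplet Loc F nil) (S : Set Loc) :
    Subheaplet (h.restrict S) h := by
  refine ⟨Set.inter_subset_right, subset_rfl, Set.inter_subset_right, ?_⟩
  intro f u hu
  exact (if_pos hu).symm

end SLFL

open SLFL in
/-- For every base SL-FL formula `α`, store `s`, and heaplet `h`:
if `(s, h) ⊨ α`, then `Supp(α, s, h) = dom(h)`; i.e., the support of a formula on any
heaplet satisfying it is exactly the domain of that heaplet. -/
theorem supp_of_sat {Loc F Var : Type} {nil : Loc}
    (α : Fml Var F Loc) (s : Var → Loc) (h : Heaplet Loc F nil)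
    (hsat : Sat (nil := nil) α s h) :
    Supp (nil := nil) α s h = some h.dom := by
  induction α generalizing s h with
  | pure δ =>
    obtain ⟨-, hdom⟩ := hsat
    simp [Supp, hdom]
  | pointsTo x f y =>
    obtain ⟨hdom, -⟩ := hsat
    simp [Supp, hdom]
  | exGuard y x f α ih =>
    obtain ⟨hx, S, hS, hdom, -⟩ := hsat
    simp only [Supp, if_pos hx, hS, hdom]
  | ite γ α β ihγ ihα ihβ =>
    obtain ⟨Sγ, hSγ, hcase⟩ := hsat
    rcases hcase with ⟨hg, Sα, hSα, hdom, -⟩ | ⟨hg, Sβ, hSβ, hdom, -⟩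
    · simp only [Supp, hSγ]
      rw [if_pos hg, hSα, Option.map_some, hdom]
    · simp only [Supp, hSγ]
      rw [if_neg hg, hSβ, Option.map_some, hdom]
  | and α β ihα ihβ =>
    obtain ⟨hα, hβ⟩ := hsat
    simp only [Supp]
    rw [union2_some (ihα s h hα) (ihβ s h hβ), Set.union_self]
  | oand α β ihα ihβ =>
    obtain ⟨Sα, Sβ, hSα, hSβ, hdom, -⟩ := hsat
    simp only [Supp]
    rw [union2_some hSα hSβ, hdom]
  | or α β ihα ihβ =>
    obtain ⟨Sα, Sβ, hSα, hSβ, hdom, -⟩ := hsat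
    simp only [Supp]
    rw [union2_some hSα hSβ, hdom]
  | star α β ihα ihβ =>
    obtain ⟨h₁, h₂, hsub₁, hsub₂, -, hdom, hα, hβ⟩ := hsat
    simp only [Supp]
    rw [union2_some (supp_mono α s hsub₁ (ihα s h₁ hα))
      (supp_mono β s hsub₂ (ihβ s h₂ hβ)), hdom]
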